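/- Let F be a field and n ≥ 3. If E, N ∈ M_n(F) are such that E is a nontrivial idempotent (E² = E, E ≠ 0, E ≠ 1) and N is a nonzero nilpotent matrix of nilpotency index 2 (N ≠ 0, N² = 0), then the distance between E and N in the commuting graph Γ(M_n(F)) is at most 2. -/

import Mathlib

/-- A matrix is noncentral iff it is not a scalar multiple of the identity. -/
def Matrix.IsNoncentral {F : Type*} [Field F] {n : ℕ} (A : Matrix (Fin n) (Fin n) F) : Prop :=
  ∀ c : F, A ≠ c • (1 : Matrix (Fin n) (Fin n) F)

/-- The commuting graph of the matrix ring `M_n(F)`: vertices are the noncentral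
matrices, and two distinct vertices are adjacent iff they commute. -/
def commutingGraph (F : Type*) [Field F] (n : ℕ) :
    SimpleGraph {A : Matrix (Fin n) (Fin n) F // A.IsNoncentral} where
  Adj A B := A ≠ B ∧ A.val * B.val = B.val * A.val
  symm := ⟨fun A B h => ⟨h.1.symm, h.2.symm⟩⟩
  loopless := ⟨fun A h => h.1 rfl⟩

/-!
The matrix `z = EN + NE - N` commutes with both `E` and `N`, so we may assume `z = c • 1`.
Then for every `R` with `ER = R` and `RE = 0` the matrix `RN + NR` commutes with `N` (as `N² = 0`)
and with `E` (as `ENE = cE` and `RNE = RN + cR`). For `R = E * single i j 1 * (1 - E)` it has rank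
at most `2 < n`, and it is nonzero for suitable `i, j` as soon as the Peirce block `(1 - E)NE` is
nonzero. Otherwise run the argument with `1 - E`; if both off-diagonal blocks of `N` vanish, `E`
and `N` commute.
-/

section Ring

variable {A : Type*} [Ring A] {E N : A}

theorem IsIdempotentElem.commute_mul_add_mul_sub (hE : IsIdempotentElem E) (N : A) :
    Commute E (E * N + N * E - N) := by
  have hEE (x : A) : x * E * E = x * E := by rw [mul_assoc, hE.eq]
  simp only [Commute, SemiconjBy, mul_sub, sub_mul, mul_add, add_mul, ← mul_assoc, hE.eq, hEE]
  abel

theorem commute_mul_add_mul_sub_of_mul_self_eq_zero (hN : N * N = 0) (E : A) :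
    Commute N (E * N + N * E - N) := by
  have hNN (x : A) : x * N * N = 0 := by rw [mul_assoc, hN, mul_zero]
  simp only [Commute, SemiconjBy, mul_sub, sub_mul, mul_add, add_mul, ← mul_assoc, hN, hNN,
    zero_mul]
  abel

theorem commute_mul_add_mul_of_mul_self_eq_zero (hN : N * N = 0) (R : A) :
    Commute N (R * N + N * R) := by
  have hNN (x : A) : x * N * N = 0 := by rw [mul_assoc, hN, mul_zero]
  simp only [Commute, SemiconjBy, mul_add, add_mul, ← mul_assoc, hN, hNN, zero_mul]
  abel

theorem IsIdempotentElem.commute_mul_add_mul {K : Type*} [CommSemiring K] [Algebra K A]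
    (hE : IsIdempotentElem E) {c : K} (hz : E * N + N * E - N = c • 1) {R : A}
    (hER : E * R = R) (hRE : R * E = 0) : Commute E (R * N + N * R) := by
  have hEE (x : A) : x * E * E = x * E := by rw [mul_assoc, hE.eq]
  have hENE : E * N * E = c • E := by
    have := congr_arg (E * · * E) hz
    simpa [mul_sub, sub_mul, mul_add, add_mul, ← mul_assoc, hE.eq, hEE] using this
  have hRNE : R * N * E = R * N + c • R := by
    have := congr_arg (R * ·) hz
    simp only [mul_sub, mul_add, ← mul_assoc, hRE, zero_mul, zero_add, mul_smul_comm,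
      mul_one] at this
    rw [← this, add_sub_cancel]
  calc E * (R * N + N * R) = R * N + E * N * E * R := by
        rw [mul_add, ← mul_assoc, hER, mul_assoc (E * N), hER, mul_assoc]
    _ = (R * N + N * R) * E := by
        rw [hENE, smul_mul_assoc, hER, add_mul, hRNE, mul_assoc N, hRE, mul_zero, add_zero]

end Ring

namespace Matrix

section General

variable {l m n o R : Type*}

theorem rank_add_le [Field R] [Fintype n] (A B : Matrix m n R) :
    (A + B).rank ≤ A.rank + B.rank := by
  rw [rank, rank, rank, mulVecLin_add]
  exact (Submodule.finrank_mono (LinearMap.range_add_le _ _)).trans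
    (Submodule.finrank_add_le_finrank_add_finrank _ _)

theorem rank_single_one_le [CommSemiring R] [StrongRankCondition R] [Fintype n] [DecidableEq m]
    [DecidableEq n] (i : m) (j : n) : (single i j (1 : R)).rank ≤ 1 := by
  rw [single_eq_single_vecMulVec_single]
  exact rank_vecMulVec_le _ _

theorem mul_single_one_mul [Semiring R] [Fintype m] [Fintype n] [DecidableEq m] [DecidableEq n]
    (A : Matrix l m R) (B : Matrix n o R) (j : m) (k : n) :
    A * single j k (1 : R) * B = vecMulVec (A.col j) (B.row k) := by
  simp [single_eq_single_vecMulVec_single, mul_vecMulVec, vecMulVec_mul]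

theorem exists_mul_single_mul_ne_zero [Semiring R] [NoZeroDivisors R] [Fintype m] [Fintype n]
    [DecidableEq m] [DecidableEq n] {A : Matrix l m R} {B : Matrix n o R}
    (hA : A ≠ 0) (hB : B ≠ 0) : ∃ (j : m) (k : n), A * single j k (1 : R) * B ≠ 0 := by
  obtain ⟨i, j, hij⟩ : ∃ i j, A i j ≠ 0 := by simpa [← Matrix.ext_iff] using hA
  obtain ⟨k, p, hkp⟩ : ∃ k p, B k p ≠ 0 := by simpa [← Matrix.ext_iff] using hB
  refine ⟨j, k, fun h ↦ mul_ne_zero hij hkp ?_⟩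
  simpa [mul_single_one_mul, vecMulVec_apply] using congr_fun₂ h i p

end General

section Noncentral

variable {F : Type*} [Field F] {n : ℕ}

theorem isNoncentral_of_ne_zero_of_rank_lt {X : Matrix (Fin n) (Fin n) F} (hX : X ≠ 0)
    (hrank : X.rank < n) : IsNoncentral X := by
  rintro c rfl
  have hc : c ≠ 0 := by rintro rfl; exact hX (zero_smul F _)
  have hunit : IsUnit (c • (1 : Matrix (Fin n) (Fin n) F)) := by
    rw [isUnit_iff_isUnit_det]; simp [hc]
  simp [rank_of_isUnit _ hunit] at hrank

theorem isNoncentral_of_mul_eq_zero {X Y : Matrix (Fin n) (Fin n) F} (hX : X ≠ 0) (hY : Y ≠ 0)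
    (h : X * Y = 0) : IsNoncentral X := by
  rintro c rfl
  rw [smul_mul_assoc, one_mul, smul_eq_zero] at h
  rcases h with rfl | h
  exacts [hX (zero_smul F _), hY h]

end Noncentral

section Construction

variable {F : Type*} [Field F] {n : ℕ} {E N : Matrix (Fin n) (Fin n) F}

theorem exists_isNoncentral_commute_of_mul_mul_ne_zero (hn : 3 ≤ n) (hE : IsIdempotentElem E)
    (hE0 : E ≠ 0) (hN : N * N = 0) {c : F} (hz : E * N + N * E - N = c • 1)
    (hNE : (1 - E) * N * E ≠ 0) :
    ∃ X : Matrix (Fin n) (Fin n) F, IsNoncentral X ∧ Commute E X ∧ Commute N X := by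
  obtain ⟨i, j, hij⟩ := exists_mul_single_mul_ne_zero hE0 hNE
  set R := E * single i j (1 : F) * (1 - E) with hR
  have hER : E * R = R := by rw [hR, ← mul_assoc, ← mul_assoc, hE.eq]
  have hRE : R * E = 0 := by rw [hR, mul_assoc, sub_mul, one_mul, hE.eq, sub_self, mul_zero]
  refine ⟨R * N + N * R, isNoncentral_of_ne_zero_of_rank_lt ?_ ?_,
    hE.commute_mul_add_mul hz hER hRE, commute_mul_add_mul_of_mul_self_eq_zero hN R⟩
  · intro h
    apply hij
    calc E * single i j 1 * ((1 - E) * N * E) = E * (R * N + N * R) * E := by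
          rw [mul_add, add_mul, ← mul_assoc E R, hER, mul_assoc E (N * R), mul_assoc N R E, hRE,
            mul_zero, mul_zero, add_zero, hR]
          simp only [mul_assoc]
      _ = 0 := by rw [h, mul_zero, zero_mul]
  · have hR1 : R.rank ≤ 1 :=
      ((rank_mul_le_left _ _).trans (rank_mul_le_right _ _)).trans (rank_single_one_le i j)
    calc (R * N + N * R).rank ≤ (R * N).rank + (N * R).rank := rank_add_le _ _
      _ ≤ R.rank + R.rank := add_le_add (rank_mul_le_left _ _) (rank_mul_le_right _ _)
      _ < n := by omega

theorem exists_isNoncentral_commute (hn : 3 ≤ n) (hE : IsIdempotentElem E) (hE0 : E ≠ 0)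
    (hE1 : E ≠ 1) (hN : N * N = 0) :
    ∃ X : Matrix (Fin n) (Fin n) F, IsNoncentral X ∧ Commute E X ∧ Commute N X := by
  by_cases hEN : Commute E N
  · exact ⟨E, isNoncentral_of_mul_eq_zero hE0 (sub_ne_zero.2 hE1.symm) hE.mul_one_sub_self,
      Commute.refl E, hEN.symm⟩
  by_cases hz : IsNoncentral (E * N + N * E - N)
  · exact ⟨_, hz, hE.commute_mul_add_mul_sub N,
      commute_mul_add_mul_sub_of_mul_self_eq_zero hN E⟩
  obtain ⟨c, hc⟩ : ∃ c : F, E * N + N * E - N = c • 1 := by simpa [IsNoncentral] using hz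
  by_cases hNE : (1 - E) * N * E = 0
  · have hEN' : E * N * (1 - E) ≠ 0 := by
      intro h
      simp only [mul_sub, mul_one, sub_mul, one_mul, sub_eq_zero] at h hNE
      exact hEN (h.trans hNE.symm)
    have hc' : (1 - E) * N + N * (1 - E) - N = (-c) • 1 := by
      rw [neg_smul, ← hc]; noncomm_ring
    obtain ⟨X, hX, hEX, hNX⟩ := exists_isNoncentral_commute_of_mul_mul_ne_zero hn hE.one_sub
      (sub_ne_zero.2 hE1.symm) hN hc' (by rwa [sub_sub_cancel])
    exact ⟨X, hX, by simpa using (Commute.one_left X).sub_left hEX, hNX⟩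
  · exact exists_isNoncentral_commute_of_mul_mul_ne_zero hn hE hE0 hN hc hNE

end Construction

end Matrix

namespace commutingGraph

variable {F : Type*} [Field F] {n : ℕ}

theorem edist_le_one_of_commute {A B : {A : Matrix (Fin n) (Fin n) F // A.IsNoncentral}}
    (h : Commute A.1 B.1) : (commutingGraph F n).edist A B ≤ 1 := by
  by_cases hAB : A = B
  · simp [hAB]
  · have hadj : (commutingGraph F n).Adj A B := ⟨hAB, h⟩
    exact (SimpleGraph.edist_eq_one_iff_adj.2 hadj).le

theorem edist_le_two_of_commute {A B : {A : Matrix (Fin n) (Fin n) F // A.IsNoncentral}}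
    {X : Matrix (Fin n) (Fin n) F} (hX : X.IsNoncentral) (hA : Commute A.1 X)
    (hB : Commute B.1 X) : (commutingGraph F n).edist A B ≤ 2 :=
  calc (commutingGraph F n).edist A B
      ≤ (commutingGraph F n).edist A ⟨X, hX⟩ + (commutingGraph F n).edist ⟨X, hX⟩ B :=
        SimpleGraph.edist_triangle
    _ ≤ 1 + 1 := add_le_add (edist_le_one_of_commute hA) (edist_le_one_of_commute hB.symm)
    _ = 2 := one_add_one_eq_two

end commutingGraph

theorem edist_le_two_of_idempotent_squareZero_general
    (F : Type*) [Field F] (n : ℕ) (hn : 3 ≤ n)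
    (E N : Matrix (Fin n) (Fin n) F)
    (hE : E * E = E) (hE0 : E ≠ 0) (hE1 : E ≠ 1)
    (hNsq : N ^ 2 = 0)
    (h₁ : E.IsNoncentral) (h₂ : N.IsNoncentral) :
    (commutingGraph F n).edist ⟨E, h₁⟩ ⟨N, h₂⟩ ≤ 2 := by
  obtain ⟨X, hX, hEX, hNX⟩ :=
    Matrix.exists_isNoncentral_commute hn hE hE0 hE1 (by rwa [← sq])
  exact commutingGraph.edist_le_two_of_commute hX hEX hNX

/-- A nontrivial idempotent and a nonzero square-zero matrix are at distance at most 2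
in the commuting graph. -/
theorem edist_le_two_of_idempotent_squareZero
    (F : Type*) [Field F] (n : ℕ) (hn : 3 ≤ n)
    (E N : Matrix (Fin n) (Fin n) F)
    (hE : E * E = E) (hE0 : E ≠ 0) (hE1 : E ≠ 1)
    (hN : N ≠ 0) (hNsq : N ^ 2 = 0)
    (h₁ : E.IsNoncentral) (h₂ : N.IsNoncentral) :
    (commutingGraph F n).edist ⟨E, h₁⟩ ⟨N, h₂⟩ ≤ 2 :=
  edist_le_two_of_idempotent_squareZero_general F n hn E N hE hE0 hE1 hNsq h₁ h₂
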